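/- arXiv:2101.12459 — 7 statements merged into one kernel-verified Lean document; each statement's English description precedes it below -/
import Mathlib

section
/- The Kullback-Leibler divergence between two univariate Cauchy distributions is symmetric: for all l1, l2 ∈ ℝ and s1, s2 > 0, D_KL(p_{l1,s1} : p_{l2,s2}) = D_KL(p_{l2,s2} : p_{l1,s1}). -/
open MeasureTheory Real

noncomputable def cauchyPdf (l s x : ℝ) : ℝ := s / (Real.pi * (s ^ 2 + (x - l) ^ 2))

/-! With `t = (l₂ - l₁) / (s₁ + s₂)`, `c = l₁ + s₁ t = l₂ - s₂ t` and `w = s₁ s₂ (1 + t²)`, the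
involution `φ x = c - w / (x - c)` of `ℝ ∖ {c}` has derivative `φ' x = w / (x - c)²` and satisfies
`φ' x * p₁ (φ x) = p₂ x` and, the data being symmetric, `φ' x * p₂ (φ x) = p₁ x`. Substituting
`φ` therefore turns the integrand of `D(p₁ : p₂)` pointwise into that of `D(p₂ : p₁)`; the change
of variables holds for every function, so no integrability of the log-ratio is needed. -/

theorem integral_comp_inversion {E : Type*} [NormedAddCommGroup E] [NormedSpace ℝ E]
    (c w : ℝ) (hw : w ≠ 0) (f : ℝ → E) :
    ∫ x, (|w| / (x - c) ^ 2) • f (c - w / (x - c)) = ∫ x, f x := by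
  set φ : ℝ → ℝ := fun x => c - w / (x - c)
  have hmaps : Set.MapsTo φ {c}ᶜ {c}ᶜ := fun x hx => by
    have : x - c ≠ 0 := sub_ne_zero.2 hx
    simpa [φ, sub_eq_self] using div_ne_zero hw this
  have hinv : Set.LeftInvOn φ φ {c}ᶜ := fun x _ => by
    simp only [φ, sub_sub_cancel_left, div_neg, div_div_cancel₀ hw]
    ring
  have hderiv : ∀ x ∈ ({c}ᶜ : Set ℝ), HasDerivWithinAt φ (w / (x - c) ^ 2) {c}ᶜ x := by
    intro x hx
    have : x - c ≠ 0 := sub_ne_zero.2 hx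
    have h := (((hasDerivAt_id x).sub_const c).inv this).const_mul w |>.const_sub c
    rw [show w / (x - c) ^ 2 = -(w * (-1 / (x - c) ^ 2)) by ring]
    exact h.hasDerivWithinAt
  have himage : φ '' {c}ᶜ = {c}ᶜ := (hinv.surjOn hmaps).image_eq_of_mapsTo hmaps
  calc ∫ x, (|w| / (x - c) ^ 2) • f (φ x)
      = ∫ x in {c}ᶜ, |w / (x - c) ^ 2| • f (φ x) := by
        simp only [restrict_compl_singleton, abs_div, abs_sq]
    _ = ∫ x in φ '' {c}ᶜ, f x :=
        (integral_image_eq_integral_abs_deriv_smul (measurableSet_singleton c).compl hderiv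
          hinv.injOn f).symm
    _ = ∫ x, f x := by rw [himage, restrict_compl_singleton]

theorem cauchyPdf_comp_inversion {l₁ l₂ s₁ s₂ t c w x : ℝ} (hs₁ : s₁ ≠ 0) (hs₂ : s₂ ≠ 0)
    (hc₁ : c = l₁ + s₁ * t) (hc₂ : c = l₂ - s₂ * t) (hw : w = s₁ * s₂ * (1 + t ^ 2))
    (hx : x ≠ c) :
    w / (x - c) ^ 2 * cauchyPdf l₁ s₁ (c - w / (x - c)) = cauchyPdf l₂ s₂ x := by
  obtain rfl : l₁ = c - s₁ * t := by linarith
  obtain rfl : l₂ = c + s₂ * t := by linarith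
  subst hw
  have : x - c ≠ 0 := sub_ne_zero.2 hx
  unfold cauchyPdf
  field_simp
  ring

theorem kl_cauchy_symm (l₁ l₂ s₁ s₂ : ℝ) (hs₁ : 0 < s₁) (hs₂ : 0 < s₂) :
    ∫ x : ℝ, cauchyPdf l₁ s₁ x * Real.log (cauchyPdf l₁ s₁ x / cauchyPdf l₂ s₂ x)
      = ∫ x : ℝ, cauchyPdf l₂ s₂ x * Real.log (cauchyPdf l₂ s₂ x / cauchyPdf l₁ s₁ x) := by
  set t := (l₂ - l₁) / (s₁ + s₂)
  set c := l₁ + s₁ * t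
  set w := s₁ * s₂ * (1 + t ^ 2)
  have hc₂ : c = l₂ - s₂ * t := by
    simp only [c, t]
    field_simp
    ring
  have hw : 0 < w := by positivity
  rw [← integral_comp_inversion c w hw.ne']
  refine integral_congr_ae ((volume.ae_ne c).mono fun x hx => ?_)
  have h₁₂ := cauchyPdf_comp_inversion (c := c) (w := w) hs₁.ne' hs₂.ne' rfl hc₂ rfl hx
  have h₂₁ := cauchyPdf_comp_inversion (c := c) (w := w) (t := -t) hs₂.ne' hs₁.ne'
    (by rw [hc₂]; ring) (by ring) (by ring) hx
  have hJ : w / (x - c) ^ 2 ≠ 0 := div_ne_zero hw.ne' (pow_ne_zero 2 (sub_ne_zero.2 hx))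
  simp only [smul_eq_mul, abs_of_pos hw]
  rw [← h₁₂, ← h₂₁, mul_div_mul_left _ _ hJ, mul_assoc]
end

section
/- For all l1, l2 ∈ ℝ and s1, s2 > 0, the Neyman chi-squared divergence between Cauchy densities satisfies ∫_ℝ (p_{l1,s1}(x) - p_{l2,s2}(x))^2 / p_{l2,s2}(x) dx = ((l1-l2)^2 + (s1-s2)^2)/(2*s1*s2). -/
open MeasureTheory Real

open Filter Topology

/-! Expanding the square, the divergence is `∫ p₁² / p₂ - 2 + 1`. After the shift `y = x - l₁`,
`p₁² / p₂` is a constant times `(y² + b y + c) / (s₁² + y²)²`, which splits into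
`(s₁² + y²)⁻¹`, `(s₁² + y²)⁻²` and the odd `y / (s₁² + y²)²`. These integrate to `π / s₁`,
`π / (2 s₁³)` (antiderivative `(y / (s₁² + y²) + arctan (y / s₁) / s₁) / (2 s₁²)`) and `0`. -/

theorem integral_sq_sub_div_eq {α : Type*} [MeasurableSpace α] {μ : Measure α} {p q : α → ℝ}
    (hq : ∀ᵐ x ∂μ, q x ≠ 0) (hp : Integrable p μ) (hqi : Integrable q μ)
    (hpq : Integrable (fun x => p x ^ 2 / q x) μ) :
    ∫ x, (p x - q x) ^ 2 / q x ∂μ = ∫ x, p x ^ 2 / q x ∂μ - 2 * ∫ x, p x ∂μ + ∫ x, q x ∂μ := by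
  have hexpand : (fun x => (p x - q x) ^ 2 / q x) =ᵐ[μ] fun x => p x ^ 2 / q x - 2 * p x + q x := by
    filter_upwards [hq] with x hx
    field_simp
    ring
  have hpq2 : Integrable (fun x => p x ^ 2 / q x - 2 * p x) μ := hpq.sub (hp.const_mul 2)
  rw [integral_congr_ae hexpand, integral_add hpq2 hqi, integral_sub hpq (hp.const_mul 2),
    integral_const_mul]

section InverseSquares

variable {s : ℝ}

theorem inv_sq_add_sq_eq (hs : s ≠ 0) (x : ℝ) :
    (s ^ 2 + x ^ 2)⁻¹ = (s ^ 2)⁻¹ * (1 + (x / s) ^ 2)⁻¹ := by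
  field_simp

theorem integrable_inv_sq_add_sq (hs : s ≠ 0) : Integrable fun x : ℝ => (s ^ 2 + x ^ 2)⁻¹ := by
  simp_rw [inv_sq_add_sq_eq hs]
  exact (integrable_inv_one_add_sq.comp_div hs).const_mul _

theorem integral_univ_inv_sq_add_sq (hs : 0 < s) : ∫ x : ℝ, (s ^ 2 + x ^ 2)⁻¹ = π / s := by
  simp_rw [inv_sq_add_sq_eq hs.ne']
  rw [integral_const_mul, Measure.integral_comp_div (fun x => (1 + x ^ 2)⁻¹),
    integral_univ_inv_one_add_sq, abs_of_pos hs, smul_eq_mul]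
  field_simp

theorem integrable_inv_sq_add_sq_sq (hs : s ≠ 0) :
    Integrable fun x : ℝ => ((s ^ 2 + x ^ 2) ^ 2)⁻¹ := by
  refine ((integrable_inv_sq_add_sq hs).const_mul (s ^ 2)⁻¹).mono' (by fun_prop) ?_
  refine ae_of_all _ fun x => ?_
  rw [norm_of_nonneg (by positivity), ← mul_inv, sq]
  gcongr
  nlinarith [sq_nonneg x]

theorem integrable_div_sq_add_sq_sq (hs : s ≠ 0) :
    Integrable fun x : ℝ => x / (s ^ 2 + x ^ 2) ^ 2 := by
  refine ((integrable_inv_sq_add_sq hs).const_mul (2 * |s|)⁻¹).mono'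
    (by fun_prop : Measurable fun x : ℝ => x / (s ^ 2 + x ^ 2) ^ 2).aestronglyMeasurable ?_
  refine ae_of_all _ fun x => ?_
  -- AM-GM: `2 |s| |x| ≤ s² + x²`
  rw [norm_div, norm_of_nonneg (by positivity : (0 : ℝ) ≤ (s ^ 2 + x ^ 2) ^ 2), norm_eq_abs,
    div_le_iff₀ (by positivity)]
  field_simp
  nlinarith [sq_nonneg (|s| - |x|), sq_abs s, sq_abs x]

theorem integral_univ_div_sq_add_sq_sq (s : ℝ) : ∫ x : ℝ, x / (s ^ 2 + x ^ 2) ^ 2 = 0 := by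
  have hodd := integral_neg_eq_self (fun x : ℝ => x / (s ^ 2 + x ^ 2) ^ 2) volume
  simp only [neg_sq, neg_div, integral_neg] at hodd
  linarith

theorem tendsto_div_sq_add_sq_cocompact (s : ℝ) :
    Tendsto (fun x : ℝ => x / (s ^ 2 + x ^ 2)) (cocompact ℝ) (𝓝 0) := by
  refine squeeze_zero_norm (fun x => ?_) (tendsto_inv_atTop_zero.comp tendsto_norm_cocompact_atTop)
  rcases eq_or_ne x 0 with rfl | hx
  · simp
  have hpos : 0 < s ^ 2 + x ^ 2 := by positivity
  calc ‖x / (s ^ 2 + x ^ 2)‖ = |x| / (s ^ 2 + x ^ 2) := by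
        rw [norm_div, norm_of_nonneg hpos.le, norm_eq_abs]
    _ ≤ |x| / x ^ 2 := by gcongr; exact le_add_of_nonneg_left (sq_nonneg s)
    _ = ‖x‖⁻¹ := by
        rw [norm_eq_abs, ← sq_abs]
        field_simp

theorem integral_univ_inv_sq_add_sq_sq (hs : 0 < s) :
    ∫ x : ℝ, ((s ^ 2 + x ^ 2) ^ 2)⁻¹ = π / (2 * s ^ 3) := by
  set F : ℝ → ℝ := fun x => (x / (s ^ 2 + x ^ 2) + arctan (x / s) / s) / (2 * s ^ 2)
  have hF : ∀ x, HasDerivAt F ((s ^ 2 + x ^ 2) ^ 2)⁻¹ x := by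
    intro x
    have hpos : 0 < s ^ 2 + x ^ 2 := by positivity
    have hden : HasDerivAt (fun x : ℝ => s ^ 2 + x ^ 2) (2 * x) x := by
      simpa using (hasDerivAt_pow 2 x).const_add (s ^ 2)
    refine ((((hasDerivAt_id' x).div hden hpos.ne').add
      (((hasDerivAt_id' x).div_const s).arctan.div_const s)).div_const _).congr_deriv ?_
    field_simp
    ring
  have hlim (l : Filter ℝ) (hl : l ≤ cocompact ℝ) {a : ℝ}
      (harctan : Tendsto (fun x => arctan (x / s)) l (𝓝 a)) :
      Tendsto F l (𝓝 ((0 + a / s) / (2 * s ^ 2))) :=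
    (((tendsto_div_sq_add_sq_cocompact s).mono_left hl).add (harctan.div_const s)).div_const _
  have htop := hlim atTop atTop_le_cocompact
    ((tendsto_arctan_atTop.mono_right nhdsWithin_le_nhds).comp (tendsto_id.atTop_div_const hs))
  have hbot := hlim atBot atBot_le_cocompact
    ((tendsto_arctan_atBot.mono_right nhdsWithin_le_nhds).comp (tendsto_id.atBot_div_const hs))
  rw [integral_of_hasDerivAt_of_tendsto hF (integrable_inv_sq_add_sq_sq hs.ne') hbot htop]
  field_simp
  ring

theorem quadratic_div_sq_add_sq_sq_eq (s b c y : ℝ) :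
    (y ^ 2 + b * y + c) / (s ^ 2 + y ^ 2) ^ 2
      = (s ^ 2 + y ^ 2)⁻¹ + (c - s ^ 2) * ((s ^ 2 + y ^ 2) ^ 2)⁻¹
        + b * (y / (s ^ 2 + y ^ 2) ^ 2) := by
  field_simp
  ring

theorem integrable_quadratic_div_sq_add_sq_sq (hs : s ≠ 0) (b c : ℝ) :
    Integrable fun y : ℝ => (y ^ 2 + b * y + c) / (s ^ 2 + y ^ 2) ^ 2 := by
  simp_rw [quadratic_div_sq_add_sq_sq_eq]
  exact ((integrable_inv_sq_add_sq hs).add ((integrable_inv_sq_add_sq_sq hs).const_mul _)).add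
    ((integrable_div_sq_add_sq_sq hs).const_mul _)

theorem integral_univ_quadratic_div_sq_add_sq_sq (hs : 0 < s) (b c : ℝ) :
    ∫ y : ℝ, (y ^ 2 + b * y + c) / (s ^ 2 + y ^ 2) ^ 2 = π * (s ^ 2 + c) / (2 * s ^ 3) := by
  have h₁ := integrable_inv_sq_add_sq hs.ne'
  have h₂ := (integrable_inv_sq_add_sq_sq hs.ne').const_mul (c - s ^ 2)
  have h₃ := (integrable_div_sq_add_sq_sq hs.ne').const_mul b
  simp_rw [quadratic_div_sq_add_sq_sq_eq]
  rw [integral_add (by exact h₁.add h₂) h₃, integral_add h₁ h₂, integral_const_mul,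
    integral_const_mul, integral_univ_inv_sq_add_sq hs, integral_univ_inv_sq_add_sq_sq hs,
    integral_univ_div_sq_add_sq_sq]
  field_simp
  ring

end InverseSquares

theorem cauchyPdf_eq_cauchyPDFReal (l : ℝ) {s : ℝ} (hs : 0 ≤ s) :
    cauchyPdf l s = ProbabilityTheory.cauchyPDFReal l s.toNNReal := by
  ext x
  rw [ProbabilityTheory.cauchyPDFReal_def, Real.coe_toNNReal s hs, cauchyPdf, div_eq_mul_inv,
    mul_inv]
  ring

theorem cauchyPdf_pos (l x : ℝ) {s : ℝ} (hs : 0 < s) : 0 < cauchyPdf l s x := by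
  unfold cauchyPdf
  positivity

theorem integrable_cauchyPdf (l : ℝ) {s : ℝ} (hs : 0 ≤ s) : Integrable (cauchyPdf l s) := by
  rw [cauchyPdf_eq_cauchyPDFReal l hs]
  exact ProbabilityTheory.integrable_cauchyPDFReal l

theorem integral_cauchyPdf (l : ℝ) {s : ℝ} (hs : 0 < s) : ∫ x, cauchyPdf l s x = 1 := by
  rw [cauchyPdf_eq_cauchyPDFReal l hs.le]
  exact ProbabilityTheory.integral_cauchyPDFReal_eq_one l (by simpa using hs)

theorem sq_cauchyPdf_div_cauchyPdf (l₁ l₂ s₁ s₂ x : ℝ) :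
    cauchyPdf l₁ s₁ x ^ 2 / cauchyPdf l₂ s₂ x = s₁ ^ 2 / (π * s₂) *
      (((x - l₁) ^ 2 + 2 * (l₁ - l₂) * (x - l₁) + ((l₁ - l₂) ^ 2 + s₂ ^ 2))
        / (s₁ ^ 2 + (x - l₁) ^ 2) ^ 2) := by
  unfold cauchyPdf
  field_simp
  ring

theorem integrable_sq_cauchyPdf_div_cauchyPdf (l₁ l₂ : ℝ) {s₁ s₂ : ℝ} (hs₁ : s₁ ≠ 0) :
    Integrable fun x => cauchyPdf l₁ s₁ x ^ 2 / cauchyPdf l₂ s₂ x := by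
  simp_rw [sq_cauchyPdf_div_cauchyPdf]
  exact ((integrable_quadratic_div_sq_add_sq_sq hs₁ _ _).comp_sub_right l₁).const_mul _

theorem integral_sq_cauchyPdf_div_cauchyPdf (l₁ l₂ : ℝ) {s₁ s₂ : ℝ} (hs₁ : 0 < s₁) :
    ∫ x, cauchyPdf l₁ s₁ x ^ 2 / cauchyPdf l₂ s₂ x
      = ((l₁ - l₂) ^ 2 + s₁ ^ 2 + s₂ ^ 2) / (2 * s₁ * s₂) := by
  simp_rw [sq_cauchyPdf_div_cauchyPdf]
  rw [integral_const_mul, integral_sub_right_eq_self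
    (fun y => (y ^ 2 + 2 * (l₁ - l₂) * y + ((l₁ - l₂) ^ 2 + s₂ ^ 2)) / (s₁ ^ 2 + y ^ 2) ^ 2) l₁,
    integral_univ_quadratic_div_sq_add_sq_sq hs₁]
  field_simp
  ring

theorem neyman_chi_sq_cauchy (l₁ l₂ s₁ s₂ : ℝ) (hs₁ : 0 < s₁) (hs₂ : 0 < s₂) :
    ∫ x : ℝ, (cauchyPdf l₁ s₁ x - cauchyPdf l₂ s₂ x) ^ 2 / cauchyPdf l₂ s₂ x
      = ((l₁ - l₂) ^ 2 + (s₁ - s₂) ^ 2) / (2 * s₁ * s₂) := by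
  rw [integral_sq_sub_div_eq (ae_of_all _ fun x => (cauchyPdf_pos l₂ x hs₂).ne')
      (integrable_cauchyPdf l₁ hs₁.le) (integrable_cauchyPdf l₂ hs₂.le)
      (integrable_sq_cauchyPdf_div_cauchyPdf l₁ l₂ hs₁.ne'),
    integral_sq_cauchyPdf_div_cauchyPdf l₁ l₂ hs₁, integral_cauchyPdf l₁ hs₁,
    integral_cauchyPdf l₂ hs₂]
  field_simp
  ring
end

section
/- For all l1, l2 ∈ ℝ and s1, s2 > 0, the Neyman and Pearson chi-squared divergences between Cauchy densities coincide: ∫_ℝ (p_{l1,s1}(x) - p_{l2,s2}(x))^2 / p_{l2,s2}(x) dx = ∫_ℝ (p_{l1,s1}(x) - p_{l2,s2}(x))^2 / p_{l1,s1}(x) dx. -/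
/-!
Identify the Cauchy law with location `l` and scale `s` with the point `l + i s` of the upper
half plane. A real Möbius map `T` of positive determinant sends that law to the Cauchy law of
`T (l + i s)`. The involution `T x = u - w / (x - u)` exchanges `l₁ + i s₁` and `l₂ + i s₂`
as soon as `(l₁ + i s₁ - u) (l₂ + i s₂ - u) = -w`, hence `p₁ (T x) T' x = p₂ x` and
`p₂ (T x) T' x = p₁ x`. Substituting `x ↦ T x` in the Neyman integral and using that
`(a - b)² / b` is homogeneous of degree one turns it into the Pearson integral.
-/

open MeasureTheory Real

noncomputable def mobiusInvolution (u w x : ℝ) : ℝ := u - w / (x - u)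

section mobiusInvolution

variable {u w : ℝ}

lemma mobiusInvolution_ne (hw : w ≠ 0) {x : ℝ} (hx : x ≠ u) : mobiusInvolution u w x ≠ u := by
  have : w / (x - u) ≠ 0 := div_ne_zero hw (sub_ne_zero.mpr hx)
  unfold mobiusInvolution
  contrapose! this
  linarith

-- At `x = u` both sides are `u`, because `w / 0 = 0`.
lemma mobiusInvolution_involutive (hw : w ≠ 0) : Function.Involutive (mobiusInvolution u w) := by
  intro x
  unfold mobiusInvolution
  rw [show u - w / (x - u) - u = -(w / (x - u)) by ring, div_neg, div_div_eq_mul_div,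
    mul_div_cancel_left₀ _ hw]
  ring

lemma bijOn_mobiusInvolution (hw : w ≠ 0) : Set.BijOn (mobiusInvolution u w) {u}ᶜ {u}ᶜ :=
  Set.InvOn.bijOn ⟨fun x _ ↦ mobiusInvolution_involutive hw x,
      fun x _ ↦ mobiusInvolution_involutive hw x⟩
    (fun _ hx ↦ mobiusInvolution_ne hw hx) (fun _ hx ↦ mobiusInvolution_ne hw hx)

lemma hasDerivAt_mobiusInvolution {x : ℝ} (hx : x ≠ u) :
    HasDerivAt (mobiusInvolution u w) (w / (x - u) ^ 2) x := by
  have h : HasDerivAt (fun y ↦ u - w * (y - u)⁻¹) (-(w * (-1 / (x - u) ^ 2))) x :=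
    ((((hasDerivAt_id x).sub_const u).inv (sub_ne_zero.mpr hx)).const_mul w).const_sub u
  convert h using 1
  · ext y
    simp only [mobiusInvolution, div_eq_mul_inv]
  · ring

theorem integral_comp_mobiusInvolution {E : Type*} [NormedAddCommGroup E] [NormedSpace ℝ E]
    (hw : w ≠ 0) (f : ℝ → E) :
    ∫ x, (|w| / (x - u) ^ 2) • f (mobiusInvolution u w x) = ∫ x, f x := by
  have hs : MeasurableSet ({u}ᶜ : Set ℝ) := (measurableSet_singleton u).compl
  have h := integral_image_eq_integral_abs_deriv_smul hs
    (fun x hx ↦ (hasDerivAt_mobiusInvolution hx).hasDerivWithinAt)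
    (bijOn_mobiusInvolution hw).injOn f
  rw [(bijOn_mobiusInvolution hw).image_eq, restrict_compl_singleton] at h
  simpa only [abs_div, abs_sq] using h.symm

end mobiusInvolution

-- `hre` and `him` are the real and imaginary parts of `(l₁ + i s₁ - u) (l₂ + i s₂ - u) = -w`.
lemma cauchyPdf_mobiusInvolution_mul {l₁ l₂ s₁ s₂ u w : ℝ} (hs₁ : 0 < s₁) (hs₂ : 0 < s₂)
    (hre : (l₁ - u) * (l₂ - u) - s₁ * s₂ = -w) (him : s₁ * (l₂ - u) + s₂ * (l₁ - u) = 0)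
    {x : ℝ} (hx : x ≠ u) :
    cauchyPdf l₁ s₁ (mobiusInvolution u w x) * (w / (x - u) ^ 2) = cauchyPdf l₂ s₂ x := by
  have hd : x - u ≠ 0 := sub_ne_zero.mpr hx
  have hden : s₁ ^ 2 + (mobiusInvolution u w x - l₁) ^ 2
      = (s₁ ^ 2 * (x - u) ^ 2 + ((u - l₁) * (x - u) - w) ^ 2) / (x - u) ^ 2 := by
    unfold mobiusInvolution
    field_simp
    ring
  have hpoly : s₁ * w * (s₂ ^ 2 + (x - l₂) ^ 2)
      = s₂ * (s₁ ^ 2 * (x - u) ^ 2 + ((u - l₁) * (x - u) - w) ^ 2) := by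
    linear_combination (s₁ * (x - u) ^ 2 - s₂ * w) * hre
      + ((u - l₁) * (x - u) ^ 2 - 2 * (x - u) * w - (u - l₂) * w) * him
  unfold cauchyPdf
  rw [hden]
  field_simp
  linear_combination hpoly

lemma exists_mobiusInvolution_swap (l₁ l₂ : ℝ) {s₁ s₂ : ℝ} (hs₁ : 0 < s₁) (hs₂ : 0 < s₂) :
    ∃ u w : ℝ, 0 < w ∧ (l₁ - u) * (l₂ - u) - s₁ * s₂ = -w ∧
      s₁ * (l₂ - u) + s₂ * (l₁ - u) = 0 := by
  set u := (l₁ * s₂ + l₂ * s₁) / (s₁ + s₂)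
  have hprod : (l₁ - u) * (l₂ - u) = -(s₁ * s₂ * (l₁ - l₂) ^ 2 / (s₁ + s₂) ^ 2) := by
    simp only [u]
    field_simp
    ring
  refine ⟨u, s₁ * s₂ - (l₁ - u) * (l₂ - u), ?_, by ring, ?_⟩
  · rw [hprod, sub_neg_eq_add]
    positivity
  · simp only [u]
    field_simp
    ring

lemma chiSq_integrand_cauchyPdf_mobiusInvolution {l₁ l₂ s₁ s₂ u w : ℝ} (hs₁ : 0 < s₁)
    (hs₂ : 0 < s₂) (hre : (l₁ - u) * (l₂ - u) - s₁ * s₂ = -w)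
    (him : s₁ * (l₂ - u) + s₂ * (l₁ - u) = 0) {x : ℝ} (hx : x ≠ u) :
    (w / (x - u) ^ 2) * ((cauchyPdf l₁ s₁ (mobiusInvolution u w x)
        - cauchyPdf l₂ s₂ (mobiusInvolution u w x)) ^ 2 / cauchyPdf l₂ s₂ (mobiusInvolution u w x))
      = (cauchyPdf l₁ s₁ x - cauchyPdf l₂ s₂ x) ^ 2 / cauchyPdf l₁ s₁ x := by
  have homog (a b c : ℝ) : c * ((a - b) ^ 2 / b) = (b * c - a * c) ^ 2 / (b * c) := by
    rcases eq_or_ne c 0 with rfl | hc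
    · simp
    · field_simp
      ring
  rw [homog, cauchyPdf_mobiusInvolution_mul hs₁ hs₂ hre him hx,
    cauchyPdf_mobiusInvolution_mul (l₁ := l₂) (l₂ := l₁) hs₂ hs₁ (by linear_combination hre)
      (by linear_combination him) hx]

theorem neyman_eq_pearson_chi_sq_cauchy (l₁ l₂ s₁ s₂ : ℝ) (hs₁ : 0 < s₁) (hs₂ : 0 < s₂) :
    ∫ x : ℝ, (cauchyPdf l₁ s₁ x - cauchyPdf l₂ s₂ x) ^ 2 / cauchyPdf l₂ s₂ x
      = ∫ x : ℝ, (cauchyPdf l₁ s₁ x - cauchyPdf l₂ s₂ x) ^ 2 / cauchyPdf l₁ s₁ x := by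
  obtain ⟨u, w, hw, hre, him⟩ := exists_mobiusInvolution_swap l₁ l₂ hs₁ hs₂
  rw [← integral_comp_mobiusInvolution (u := u) hw.ne', abs_of_pos hw]
  refine integral_congr_ae ?_
  filter_upwards [Measure.ae_ne volume u] with x hx
  exact chiSq_integrand_cauchyPdf_mobiusInvolution hs₁ hs₂ hre him hx
end

section
/- For every integer a ≥ 2 there exists a polynomial J_a of degree a-1 with rational coefficients and constant term 1 such that for all z, w in the upper half plane, ∫_ℝ p_z(x)^a * p_w(x)^{1-a} dx = J_a(χ(z,w)), where χ(z,w) = |z-w|^2/(2*Im(z)*Im(w)). -/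
open MeasureTheory Real

noncomputable def cauchyPdfC (θ : ℂ) (x : ℝ) : ℝ :=
  θ.im / (Real.pi * ((x - θ.re) ^ 2 + θ.im ^ 2))

noncomputable def chi (z w : ℂ) : ℝ := ‖z - w‖ ^ 2 / (2 * z.im * w.im)

/-!
Write a = n + 1 and substitute x = Re z + Im z · tan φ. This carries p_z(x) dx to dφ / π on
(-π/2, π/2), and turns p_z / p_w into the trigonometric polynomial
1 + χ + A cos 2φ + B sin 2φ with A² + B² = (1 + χ)² - 1. A phase shift turns it into
1 + χ + √(χ² + 2χ) sin t; in the binomial expansion of its n-th power the odd powers of sin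
integrate to zero over a period and the even ones give Wallis' integrals, leaving a polynomial
in χ with leading coefficient ∑ⱼ C(n, 2j) · (2j-1)!!/(2j)!! > 0 and value 1 at χ = 0.
-/

open Finset

theorem Finset.sum_range_succ_eq_sum_even {M : Type*} [AddCommMonoid M] (f : ℕ → M) (n : ℕ)
    (hf : ∀ j, f (2 * j + 1) = 0) :
    ∑ m ∈ range (n + 1), f m = ∑ j ∈ range (n / 2 + 1), f (2 * j) := by
  rw [← sum_image (f := f) (s := range (n / 2 + 1)) (g := (2 * ·))
    fun i _ j _ h => by simp only at h; omega]
  refine (sum_subset (fun m hm => ?_) fun m hm hm' => ?_).symm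
  · obtain ⟨j, hj, rfl⟩ := mem_image.mp hm
    simp only [mem_range] at hj ⊢; omega
  · obtain ⟨j, rfl | rfl⟩ := Nat.even_or_odd' m
    · exact absurd (mem_image_of_mem _ (mem_range.mpr (by simp only [mem_range] at hm; omega)))
        hm'
    · exact hf j

theorem integral_sin_pow_zero_two_pi (m : ℕ) :
    ∫ x in 0..2 * π, sin x ^ m = (1 + (-1) ^ m) * ∫ x in 0..π, sin x ^ m := by
  have hshift : ∫ x in π..2 * π, sin x ^ m = (-1) ^ m * ∫ x in 0..π, sin x ^ m := by
    have h := intervalIntegral.integral_comp_add_right (fun x => sin x ^ m) π (a := 0) (b := π)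
    simp only [sin_add_pi, neg_pow (sin _), zero_add] at h
    rw [intervalIntegral.integral_const_mul, ← two_mul] at h
    exact h.symm
  have hintegrable : ∀ a b : ℝ, IntervalIntegrable (fun x => sin x ^ m) volume a b := fun a b =>
    (continuous_sin.pow m).intervalIntegrable a b
  rw [← intervalIntegral.integral_add_adjacent_intervals (hintegrable 0 π)
    (hintegrable π (2 * π)), hshift]
  ring

theorem integral_add_mul_sin_pow (C R : ℝ) (n : ℕ) :
    ∫ t in 0..2 * π, (C + R * sin t) ^ n
      = 2 * ∑ j ∈ range (n / 2 + 1),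
          n.choose (2 * j) * C ^ (n - 2 * j) * (R ^ 2) ^ j * ∫ x in 0..π, sin x ^ (2 * j) := by
  have hterm : ∀ m, ∫ t in 0..2 * π, (R * sin t) ^ m * C ^ (n - m) * n.choose m
      = (1 + (-1) ^ m) * (n.choose m * C ^ (n - m) * R ^ m * ∫ x in 0..π, sin x ^ m) := by
    intro m
    simp only [mul_pow, mul_comm (R ^ m), mul_assoc, intervalIntegral.integral_mul_const,
      integral_sin_pow_zero_two_pi]
    ring
  simp_rw [add_comm C, add_pow]
  rw [intervalIntegral.integral_finsetSum fun m _ => by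
    apply Continuous.intervalIntegrable; fun_prop]
  simp only [hterm]
  rw [sum_range_succ_eq_sum_even _ n fun j => by simp [pow_succ, pow_mul], mul_sum]
  refine sum_congr rfl fun j _ => ?_
  simp only [pow_mul, neg_one_sq, one_pow]
  ring

theorem exists_mul_cos_add_mul_sin_eq (A B : ℝ) :
    ∃ α, ∀ t, A * cos t + B * sin t = √(A ^ 2 + B ^ 2) * sin (t + α) := by
  set u : ℂ := ⟨B, A⟩
  have hnorm : ‖u‖ = √(A ^ 2 + B ^ 2) := by
    rw [Complex.norm_def, Complex.normSq_mk]; ring_nf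
  refine ⟨Complex.arg u, fun t => ?_⟩
  rw [sin_add, ← hnorm]
  linear_combination (-cos t) * Complex.norm_mul_sin_arg u - sin t * Complex.norm_mul_cos_arg u

theorem integral_add_mul_cos_add_mul_sin_pow (C A B c : ℝ) (n : ℕ) :
    ∫ t in c..c + 2 * π, (C + A * cos t + B * sin t) ^ n
      = ∫ t in 0..2 * π, (C + √(A ^ 2 + B ^ 2) * sin t) ^ n := by
  obtain ⟨α, hα⟩ := exists_mul_cos_add_mul_sin_eq A B
  have hper : Function.Periodic (fun t => (C + √(A ^ 2 + B ^ 2) * sin t) ^ n) (2 * π) :=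
    fun t => by simp only [sin_add_two_pi]
  simp only [add_assoc, hα]
  rw [intervalIntegral.integral_comp_add_right (fun t => (C + √(A ^ 2 + B ^ 2) * sin t) ^ n),
    add_right_comm, hper.intervalIntegral_add_eq (c + α) 0, zero_add]

theorem integral_eq_integral_Ioo_tan (g : ℝ → ℝ) (l : ℝ) {s : ℝ} (hs : 0 < s) :
    ∫ x, g x = ∫ φ in Set.Ioo (-(π / 2)) (π / 2), s / cos φ ^ 2 * g (l + s * tan φ) := by
  set I := Set.Ioo (-(π / 2)) (π / 2)
  have himage : (fun φ => l + s * tan φ) '' I = Set.univ := by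
    rw [← Set.image_image (fun y => l + s * y), image_tan_Ioo, Set.image_univ,
      Set.range_eq_univ]
    exact fun x => ⟨(x - l) / s, by field_simp; ring⟩
  have hderiv : ∀ φ ∈ I, HasDerivWithinAt (fun φ => l + s * tan φ) (s / cos φ ^ 2) I φ := by
    intro φ hφ
    simpa [div_eq_mul_inv] using
      (((hasDerivAt_tan (cos_pos_of_mem_Ioo hφ).ne').const_mul s).const_add l).hasDerivWithinAt
  have hinj : Set.InjOn (fun φ => l + s * tan φ) I := fun x hx y hy h =>
    injOn_tan hx hy (mul_left_cancel₀ hs.ne' (add_left_cancel h))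
  have hcov := integral_image_eq_integral_abs_deriv_smul measurableSet_Ioo hderiv hinj g
  rw [himage, setIntegral_univ] at hcov
  rw [hcov]
  refine setIntegral_congr_fun measurableSet_Ioo fun φ hφ => ?_
  have := cos_pos_of_mem_Ioo hφ
  rw [smul_eq_mul, abs_of_pos (by positivity)]

theorem chi_eq_div (z w : ℂ) :
    chi z w = ((z.re - w.re) ^ 2 + (z.im - w.im) ^ 2) / (2 * z.im * w.im) := by
  rw [chi, Complex.sq_norm, Complex.normSq_apply, Complex.sub_re, Complex.sub_im]
  ring

theorem cauchyPdfC_re_add_im_mul_tan {θ : ℂ} (hθ : θ.im ≠ 0) {φ : ℝ} (hφ : cos φ ≠ 0) :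
    cauchyPdfC θ (θ.re + θ.im * tan φ) = cos φ ^ 2 / (π * θ.im) := by
  rw [cauchyPdfC, tan_eq_sin_div_cos]
  field_simp
  linear_combination -θ.im ^ 2 * sin_sq_add_cos_sq φ

theorem cauchyPdfC_div_cauchyPdfC_re_add_im_mul_tan {z w : ℂ} (hz : z.im ≠ 0) (hw : w.im ≠ 0)
    {φ : ℝ} (hφ : cos φ ≠ 0) :
    cauchyPdfC z (z.re + z.im * tan φ) / cauchyPdfC w (z.re + z.im * tan φ)
      = 1 + chi z w + ((z.re - w.re) ^ 2 + w.im ^ 2 - z.im ^ 2) / (2 * z.im * w.im) * cos (2 * φ)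
          + (z.re - w.re) / w.im * sin (2 * φ) := by
  rw [cauchyPdfC_re_add_im_mul_tan hz hφ, cauchyPdfC, chi_eq_div, cos_two_mul, sin_two_mul,
    tan_eq_sin_div_cos]
  field_simp
  linear_combination 2 * z.im ^ 2 * sin_sq_add_cos_sq φ

theorem integral_cauchyPdfC_pow_mul_zpow {z w : ℂ} (hz : 0 < z.im) (hw : 0 < w.im) (n : ℕ) :
    ∫ x, cauchyPdfC z x ^ ((n + 1 : ℕ) : ℤ) * cauchyPdfC w x ^ ((1 : ℤ) - (n + 1 : ℕ))
      = ∑ j ∈ range (n / 2 + 1), n.choose (2 * j) * (∏ i ∈ range j, (2 * (i : ℝ) + 1) / (2 * i + 2))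
          * (1 + chi z w) ^ (n - 2 * j) * (chi z w ^ 2 + 2 * chi z w) ^ j := by
  set A := ((z.re - w.re) ^ 2 + w.im ^ 2 - z.im ^ 2) / (2 * z.im * w.im)
  set B := (z.re - w.re) / w.im
  have hAB : A ^ 2 + B ^ 2 = chi z w ^ 2 + 2 * chi z w := by
    simp only [A, B, chi_eq_div]; field_simp; ring
  have hpow : ∀ x, cauchyPdfC z x ^ ((n + 1 : ℕ) : ℤ) * cauchyPdfC w x ^ ((1 : ℤ) - (n + 1 : ℕ))
      = cauchyPdfC z x * (cauchyPdfC z x / cauchyPdfC w x) ^ n := by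
    intro x
    rw [show (1 : ℤ) - (n + 1 : ℕ) = -(n : ℤ) by push_cast; ring, zpow_neg, zpow_natCast,
      zpow_natCast, div_pow, pow_succ]
    ring
  have hsubst : ∀ φ ∈ Set.Ioo (-(π / 2)) (π / 2),
      z.im / cos φ ^ 2 * (cauchyPdfC z (z.re + z.im * tan φ)
        * (cauchyPdfC z (z.re + z.im * tan φ) / cauchyPdfC w (z.re + z.im * tan φ)) ^ n)
      = π⁻¹ * (1 + chi z w + A * cos (2 * φ) + B * sin (2 * φ)) ^ n := by
    intro φ hφ
    have hc := (cos_pos_of_mem_Ioo hφ).ne'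
    rw [cauchyPdfC_div_cauchyPdfC_re_add_im_mul_tan hz.ne' hw.ne' hc,
      cauchyPdfC_re_add_im_mul_tan hz.ne' hc]
    simp only [A, B]
    field_simp
  simp_rw [hpow]
  rw [integral_eq_integral_Ioo_tan _ z.re hz, setIntegral_congr_fun measurableSet_Ioo hsubst,
    ← integral_Ioc_eq_integral_Ioo, ← intervalIntegral.integral_of_le (by linarith [pi_pos]),
    intervalIntegral.integral_const_mul,
    intervalIntegral.integral_comp_mul_left (fun ψ => (1 + chi z w + A * cos ψ + B * sin ψ) ^ n)
      two_ne_zero,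
    show 2 * -(π / 2) = -π by ring, show 2 * (π / 2) = -π + 2 * π by ring,
    integral_add_mul_cos_add_mul_sin_pow, integral_add_mul_sin_pow, sq_sqrt (by positivity), hAB,
    smul_eq_mul, mul_sum, mul_sum, mul_sum]
  refine sum_congr rfl fun j _ => ?_
  rw [integral_sin_pow_even]
  field_simp

open Polynomial

noncomputable def cauchyPowerPoly (n : ℕ) : ℚ[X] :=
  ∑ j ∈ range (n / 2 + 1), C (n.choose (2 * j) * ∏ i ∈ range j, (2 * (i : ℚ) + 1) / (2 * i + 2))
    * ((1 + X) ^ (n - 2 * j) * (X ^ 2 + 2 * X) ^ j)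

theorem monic_one_add_X_pow_mul_X_sq_add_two_mul_X_pow (k j : ℕ) :
    ((1 + X) ^ k * (X ^ 2 + 2 * X) ^ j : ℚ[X]).Monic := by
  monicity!

theorem natDegree_one_add_X_pow_mul_X_sq_add_two_mul_X_pow (k j : ℕ) :
    ((1 + X) ^ k * (X ^ 2 + 2 * X) ^ j : ℚ[X]).natDegree = k + 2 * j := by
  compute_degree! <;> omega

theorem coeff_cauchyPowerPoly_self (n : ℕ) :
    (cauchyPowerPoly n).coeff n = ∑ j ∈ range (n / 2 + 1),
      n.choose (2 * j) * ∏ i ∈ range j, (2 * (i : ℚ) + 1) / (2 * i + 2) := by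
  rw [cauchyPowerPoly, finsetSum_coeff]
  refine sum_congr rfl fun j hj => ?_
  have hlead := (monic_one_add_X_pow_mul_X_sq_add_two_mul_X_pow (n - 2 * j) j).coeff_natDegree
  rw [natDegree_one_add_X_pow_mul_X_sq_add_two_mul_X_pow,
    Nat.sub_add_cancel (by simp only [mem_range] at hj; omega)] at hlead
  rw [coeff_C_mul, hlead, mul_one]

theorem natDegree_cauchyPowerPoly (n : ℕ) : (cauchyPowerPoly n).natDegree = n := by
  refine natDegree_eq_of_le_of_coeff_ne_zero
    (natDegree_sum_le_of_forall_le _ _ fun j hj => (natDegree_C_mul_le _ _).trans ?_) ?_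
  · rw [natDegree_one_add_X_pow_mul_X_sq_add_two_mul_X_pow]
    simp only [mem_range] at hj; omega
  · rw [coeff_cauchyPowerPoly_self]
    exact (sum_pos' (fun j _ => by positivity) ⟨0, by simp, by simp⟩).ne'

theorem coeff_zero_cauchyPowerPoly (n : ℕ) : (cauchyPowerPoly n).coeff 0 = 1 := by
  rw [coeff_zero_eq_eval_zero, cauchyPowerPoly, eval_finsetSum, sum_eq_single 0]
  · simp
  · intro j _ hj
    simp [zero_pow hj]
  · simp

theorem aeval_cauchyPowerPoly (n : ℕ) (x : ℝ) :
    aeval x (cauchyPowerPoly n) = ∑ j ∈ range (n / 2 + 1),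
      n.choose (2 * j) * (∏ i ∈ range j, (2 * (i : ℝ) + 1) / (2 * i + 2))
        * (1 + x) ^ (n - 2 * j) * (x ^ 2 + 2 * x) ^ j := by
  simp only [cauchyPowerPoly, map_sum, map_mul, aeval_C, map_add, map_pow, map_one, aeval_X,
    map_ofNat, eq_ratCast]
  push_cast
  simp only [mul_assoc]

theorem powerChi_polynomial (a : ℕ) (ha : 2 ≤ a) :
    ∃ J : Polynomial ℚ, J.natDegree = a - 1 ∧ J.coeff 0 = 1 ∧
      ∀ z w : ℂ, 0 < z.im → 0 < w.im →
        ∫ x : ℝ, cauchyPdfC z x ^ (a : ℤ) * cauchyPdfC w x ^ ((1 : ℤ) - a)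
          = Polynomial.aeval (chi z w) J := by
  obtain ⟨n, rfl⟩ : ∃ n, a = n + 1 := ⟨a - 1, by omega⟩
  refine ⟨cauchyPowerPoly n, natDegree_cauchyPowerPoly n, coeff_zero_cauchyPowerPoly n,
    fun z w hz hw => ?_⟩
  rw [integral_cauchyPdfC_pow_mul_zpow hz hw, aeval_cauchyPowerPoly]
end

section
/- For all z, w in the upper half plane, ∫_ℝ p_z(x)^2 / p_w(x) dx = 1 + χ(z,w), and ∫_ℝ p_z(x)^3 / p_w(x)^2 dx = (3*(χ(z,w)+1)^2 - 1)/2, where χ(z,w) = |z-w|^2/(2*Im(z)*Im(w)). -/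
/-!
Both integrals, and `chi`, are unchanged when `z`, `w` and the integration variable are moved by
the same real affine map `x ↦ a * x + b` with `a > 0`, so we may take `z = I`. Then, with
`w = m + t * I`, the integrands are `((x - m) ^ 2 + t ^ 2) ^ k / (1 + x ^ 2) ^ (k + 1)` up to a
constant factor. Each has a primitive of the form (rational function vanishing at `±∞`) plus
`c * arctan x`, so its integral is `c * π`.
-/

open MeasureTheory Real

open Filter Topology Set

theorem integral_of_hasDerivAt_of_nonneg {F f : ℝ → ℝ} {A B : ℝ}
    (hderiv : ∀ x, HasDerivAt F (f x) x) (hf : ∀ x, 0 ≤ f x)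
    (hbot : Tendsto F atBot (𝓝 A)) (htop : Tendsto F atTop (𝓝 B)) :
    ∫ x, f x = B - A := by
  have hIoi : IntegrableOn f (Ioi 0) :=
    integrableOn_Ioi_deriv_of_nonneg' (fun x _ ↦ hderiv x) (fun x _ ↦ hf x) htop
  have hIio : IntegrableOn f (Iio 0) := by
    have hderiv' (x : ℝ) : HasDerivAt (fun y ↦ -F (-y)) (f (-x)) x :=
      ((hderiv (-x)).comp x (hasDerivAt_id x).neg).neg.congr_deriv (by ring)
    have h := integrableOn_Ioi_deriv_of_nonneg' (a := 0) (fun x _ ↦ hderiv' x) (fun x _ ↦ hf (-x))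
      (hbot.comp tendsto_neg_atTop_atBot).neg
    rw [← (Measure.measurePreserving_neg volume).integrableOn_comp_preimage
      (Homeomorph.neg ℝ).measurableEmbedding]
    simpa [Function.comp_def] using h
  refine integral_of_hasDerivAt_of_tendsto hderiv ?_ hbot htop
  rw [← integrableOn_univ, ← Iio_union_Ici (a := (0 : ℝ)), integrableOn_union,
    integrableOn_Ici_iff_integrableOn_Ioi]
  exact ⟨hIio, hIoi⟩

theorem tendsto_linear_div_one_add_sq_pow_cocompact (p q : ℝ) {n : ℕ} (hn : n ≠ 0) :
    Tendsto (fun x : ℝ ↦ (p * x + q) / (1 + x ^ 2) ^ n) (cocompact ℝ) (𝓝 0) := by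
  have hnorm := tendsto_norm_cocompact_atTop (E := ℝ)
  refine squeeze_zero_norm' ?_ ((tendsto_const_nhds (x := |p| + |q|)).div_atTop hnorm)
  filter_upwards [hnorm.eventually_ge_atTop 1] with x hx
  simp only [Real.norm_eq_abs] at hx ⊢
  have hnum : |p * x + q| ≤ (|p| + |q|) * |x| := by
    calc |p * x + q| ≤ |p| * |x| + |q| := by simpa [abs_mul] using abs_add_le (p * x) q
      _ ≤ (|p| + |q|) * |x| := by nlinarith [abs_nonneg q]
  have hden : |x| ^ 2 ≤ (1 + x ^ 2) ^ n := by
    calc |x| ^ 2 ≤ 1 + x ^ 2 := by simp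
      _ ≤ (1 + x ^ 2) ^ n := le_self_pow₀ (by nlinarith) hn
  rw [abs_div, abs_of_pos (by positivity : (0 : ℝ) < (1 + x ^ 2) ^ n),
    div_le_div_iff₀ (by positivity) (by linarith)]
  calc |p * x + q| * |x| ≤ (|p| + |q|) * |x| ^ 2 := by
        nlinarith [mul_le_mul_of_nonneg_right hnum (abs_nonneg x)]
    _ ≤ (|p| + |q|) * (1 + x ^ 2) ^ n := by gcongr

theorem hasDerivAt_linear_div_one_add_sq_pow (p q : ℝ) (n : ℕ) (x : ℝ) :
    HasDerivAt (fun y ↦ (p * y + q) / (1 + y ^ 2) ^ n)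
      ((p * (1 + x ^ 2) - 2 * n * x * (p * x + q)) / (1 + x ^ 2) ^ (n + 1)) x := by
  have hQ : HasDerivAt (fun y : ℝ ↦ 1 + y ^ 2) (2 * x) x := by
    simpa using (hasDerivAt_pow 2 x).const_add 1
  refine (((hasDerivAt_id x).const_mul p |>.add_const q).div (hQ.fun_pow n)
    (by positivity)).congr_deriv ?_
  cases n with
  | zero => simp; field_simp
  | succ n =>
    simp only [id, Nat.add_sub_cancel]
    field_simp
    push_cast
    ring

theorem integral_eq_mul_pi_of_hasDerivAt_add_mul_arctan {R f : ℝ → ℝ} {k : ℝ}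
    (hderiv : ∀ x, HasDerivAt (fun y ↦ R y + k * arctan y) (f x) x) (hf : ∀ x, 0 ≤ f x)
    (hR : Tendsto R (cocompact ℝ) (𝓝 0)) :
    ∫ x, f x = k * π := by
  have hbot := (hR.mono_left atBot_le_cocompact).add
    ((tendsto_arctan_atBot.mono_right nhdsWithin_le_nhds).const_mul k)
  have htop := (hR.mono_left atTop_le_cocompact).add
    ((tendsto_arctan_atTop.mono_right nhdsWithin_le_nhds).const_mul k)
  rw [integral_of_hasDerivAt_of_nonneg hderiv hf hbot htop]
  ring

theorem integral_sub_sq_add_sq_div_one_add_sq_sq (m t : ℝ) :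
    ∫ x, ((x - m) ^ 2 + t ^ 2) / (1 + x ^ 2) ^ 2 = π * (m ^ 2 + t ^ 2 + 1) / 2 := by
  set c := m ^ 2 + t ^ 2
  have hderiv (x : ℝ) : HasDerivAt (fun y ↦ ((c - 1) / 2 * y + m) / (1 + y ^ 2) ^ 1
      + (c + 1) / 2 * arctan y) (((x - m) ^ 2 + t ^ 2) / (1 + x ^ 2) ^ 2) x := by
    refine ((hasDerivAt_linear_div_one_add_sq_pow _ _ 1 x).add
      ((hasDerivAt_arctan x).const_mul _)).congr_deriv ?_
    field_simp
    ring
  rw [integral_eq_mul_pi_of_hasDerivAt_add_mul_arctan hderiv (fun x ↦ by positivity)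
    (tendsto_linear_div_one_add_sq_pow_cocompact _ _ one_ne_zero)]
  ring

theorem integral_sub_sq_add_sq_sq_div_one_add_sq_pow_three (m t : ℝ) :
    ∫ x, ((x - m) ^ 2 + t ^ 2) ^ 2 / (1 + x ^ 2) ^ 3 =
      π * (3 * (m ^ 2 + t ^ 2 + 1) ^ 2 - 4 * t ^ 2) / 8 := by
  set c := m ^ 2 + t ^ 2
  -- `e` is the coefficient of `(1 + x ^ 2)⁻¹ ^ 3` in the partial fraction expansion of the integrand
  set e := (c - 1) ^ 2 - 4 * m ^ 2
  set p := 2 * m ^ 2 + c - 1 + 3 * e / 8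
  have hderiv (x : ℝ) : HasDerivAt (fun y ↦ ((p * y + 2 * m) / (1 + y ^ 2) ^ 1
      + (e / 4 * y + m * (c - 1)) / (1 + y ^ 2) ^ 2) + (1 + p) * arctan y)
      (((x - m) ^ 2 + t ^ 2) ^ 2 / (1 + x ^ 2) ^ 3) x := by
    refine (((hasDerivAt_linear_div_one_add_sq_pow _ _ 1 x).add
      (hasDerivAt_linear_div_one_add_sq_pow _ _ 2 x)).add
      ((hasDerivAt_arctan x).const_mul _)).congr_deriv ?_
    field_simp
    ring
  rw [integral_eq_mul_pi_of_hasDerivAt_add_mul_arctan hderiv (fun x ↦ by positivity)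
    (add_zero (0 : ℝ) ▸ (tendsto_linear_div_one_add_sq_pow_cocompact _ _ one_ne_zero).add
      (tendsto_linear_div_one_add_sq_pow_cocompact _ _ two_ne_zero))]
  ring

theorem cauchyPdfC_mul_add (θ : ℂ) {a : ℝ} (ha : a ≠ 0) (b x : ℝ) :
    cauchyPdfC (a * θ + b) (a * x + b) = cauchyPdfC θ x / a := by
  simp only [cauchyPdfC, Complex.add_re, Complex.add_im, Complex.re_ofReal_mul,
    Complex.im_ofReal_mul, Complex.ofReal_re, Complex.ofReal_im, add_zero]
  rw [show a * x + b - (a * θ.re + b) = a * (x - θ.re) by ring, mul_pow, mul_pow, ← mul_add]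
  field_simp

theorem chi_mul_add (θ η : ℂ) {a : ℝ} (ha : a ≠ 0) (b : ℝ) :
    chi (a * θ + b) (a * η + b) = chi θ η := by
  simp only [chi, add_sub_add_right_eq_sub, ← mul_sub, norm_mul, Complex.norm_real,
    Complex.im_ofReal_mul, Complex.add_im, Complex.ofReal_im, add_zero, Real.norm_eq_abs]
  rw [mul_pow, sq_abs]
  field_simp

theorem integral_cauchyPdfC_pow_succ_div_pow_mul_add (θ η : ℂ) {a : ℝ} (ha : 0 < a) (b : ℝ)
    (n : ℕ) :
    ∫ x, cauchyPdfC (a * θ + b) x ^ (n + 1) / cauchyPdfC (a * η + b) x ^ n =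
      ∫ x, cauchyPdfC θ x ^ (n + 1) / cauchyPdfC η x ^ n := by
  set f := fun y ↦ cauchyPdfC (a * θ + b) y ^ (n + 1) / cauchyPdfC (a * η + b) y ^ n
  have hf (x : ℝ) : f (a * x + b) = (cauchyPdfC θ x ^ (n + 1) / cauchyPdfC η x ^ n) / a := by
    simp only [f, cauchyPdfC_mul_add _ ha.ne']
    generalize cauchyPdfC θ x = P, cauchyPdfC η x = Q
    calc (P / a) ^ (n + 1) / (Q / a) ^ n = P / a * ((P / a) / (Q / a)) ^ n := by
          rw [pow_succ, div_pow]; ring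
      _ = P ^ (n + 1) / Q ^ n / a := by
          rw [div_div_div_cancel_right₀ ha.ne', div_pow]; ring
  calc ∫ y, f y = a * ∫ x, f (a * x + b) := by
        rw [Measure.integral_comp_mul_left (fun y ↦ f (y + b)), integral_add_right_eq_self,
          abs_of_pos (inv_pos.2 ha), smul_eq_mul, mul_inv_cancel_left₀ ha.ne']
    _ = ∫ x, cauchyPdfC θ x ^ (n + 1) / cauchyPdfC η x ^ n := by
        simp_rw [hf, integral_div]
        field_simp

theorem cauchyPdfC_I (x : ℝ) : cauchyPdfC Complex.I x = 1 / (π * (1 + x ^ 2)) := by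
  simp [cauchyPdfC, add_comm]

theorem chi_I_add_one (η : ℂ) (hη : η.im ≠ 0) :
    chi Complex.I η + 1 = (η.re ^ 2 + η.im ^ 2 + 1) / (2 * η.im) := by
  simp only [chi, Complex.sq_norm, Complex.normSq_apply, Complex.sub_re, Complex.sub_im,
    Complex.I_re, Complex.I_im]
  field_simp
  ring

theorem integral_cauchyPdfC_I_sq_div (η : ℂ) (hη : 0 < η.im) :
    ∫ x, cauchyPdfC Complex.I x ^ 2 / cauchyPdfC η x = 1 + chi Complex.I η := by
  have h (x : ℝ) : cauchyPdfC Complex.I x ^ 2 / cauchyPdfC η x =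
      ((x - η.re) ^ 2 + η.im ^ 2) / (1 + x ^ 2) ^ 2 / (π * η.im) := by
    rw [cauchyPdfC_I, cauchyPdfC]
    field_simp
  simp_rw [h, integral_div, integral_sub_sq_add_sq_div_one_add_sq_sq]
  rw [add_comm 1, chi_I_add_one η hη.ne']
  field_simp

theorem integral_cauchyPdfC_I_pow_three_div_sq (η : ℂ) (hη : 0 < η.im) :
    ∫ x, cauchyPdfC Complex.I x ^ 3 / cauchyPdfC η x ^ 2 =
      (3 * (chi Complex.I η + 1) ^ 2 - 1) / 2 := by
  have h (x : ℝ) : cauchyPdfC Complex.I x ^ 3 / cauchyPdfC η x ^ 2 =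
      ((x - η.re) ^ 2 + η.im ^ 2) ^ 2 / (1 + x ^ 2) ^ 3 / (π * η.im ^ 2) := by
    rw [cauchyPdfC_I, cauchyPdfC]
    field_simp
  simp_rw [h, integral_div, integral_sub_sq_add_sq_sq_div_one_add_sq_pow_three]
  rw [chi_I_add_one η hη.ne']
  field_simp
  ring

theorem powerChi_two_three (z w : ℂ) (hz : 0 < z.im) (hw : 0 < w.im) :
    (∫ x : ℝ, cauchyPdfC z x ^ 2 / cauchyPdfC w x) = 1 + chi z w ∧
    (∫ x : ℝ, cauchyPdfC z x ^ 3 / cauchyPdfC w x ^ 2) = (3 * (chi z w + 1) ^ 2 - 1) / 2 := by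
  set η : ℂ := (w - z.re) / z.im
  have hη : 0 < η.im := by
    simpa [η, Complex.div_ofReal_im] using div_pos hw hz
  have hz_eq : (z.im : ℂ) * Complex.I + z.re = z := by
    rw [add_comm, Complex.re_add_im]
  have hw_eq : (z.im : ℂ) * η + z.re = w := by
    rw [mul_div_cancel₀ _ (Complex.ofReal_ne_zero.2 hz.ne'), sub_add_cancel]
  have hchi : chi z w = chi Complex.I η := by
    rw [← chi_mul_add Complex.I η hz.ne' z.re, hz_eq, hw_eq]
  have h2 := integral_cauchyPdfC_pow_succ_div_pow_mul_add Complex.I η hz z.re 1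
  have h3 := integral_cauchyPdfC_pow_succ_div_pow_mul_add Complex.I η hz z.re 2
  simp only [hz_eq, hw_eq, pow_one, Nat.reduceAdd] at h2 h3
  rw [h2, h3, hchi]
  exact ⟨integral_cauchyPdfC_I_sq_div η hη, integral_cauchyPdfC_I_pow_three_div_sq η hη⟩
end

section
/- The function d(θ1, θ2) = sqrt( log(1 + χ(θ1,θ2)/2) ), where χ(θ1,θ2) = |θ1-θ2|^2/(2*Im(θ1)*Im(θ2)), is a metric on the upper half plane ℍ; i.e., the square root of the Kullback-Leibler divergence between univariate Cauchy distributions satisfies the triangle inequality, vanishes exactly on the diagonal, and is symmetric. -/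
noncomputable def sqrtKL (z w : ℂ) : ℝ := Real.sqrt (Real.log (1 + chi z w / 2))

/-!
Writing `ρ` for the hyperbolic distance on `ℍ`, one has `1 + χ(z, w)/2 = cosh² (ρ(z, w)/2)`, so
`sqrtKL z w = √2 · g (ρ(z, w)/2)` with `g t = √(log (cosh t))`. Since `g` is increasing in `|t|`,
the triangle inequality for `ρ` reduces that of `sqrtKL` to the subadditivity of `g`, which follows
from `log cosh (a + b) ≤ log cosh a + log cosh b + tanh a tanh b` and `tanh² ≤ 2 log cosh`.
-/

open Real UpperHalfPlane

namespace Real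

theorem tanh_sq_le_two_mul_log_cosh (t : ℝ) : tanh t ^ 2 ≤ 2 * log (cosh t) := by
  have hc : 0 < cosh t ^ 2 := by positivity
  calc tanh t ^ 2 = 1 - (cosh t ^ 2)⁻¹ := by
        rw [tanh_eq_sinh_div_cosh, div_pow, cosh_sq]; field_simp; ring
    _ ≤ log (cosh t ^ 2) := one_sub_inv_le_log_of_pos hc
    _ = 2 * log (cosh t) := by rw [log_pow]; norm_num

theorem abs_tanh_le_sqrt_two_mul_log_cosh (t : ℝ) : |tanh t| ≤ √(2 * log (cosh t)) := by
  rw [← sqrt_sq_eq_abs]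
  exact sqrt_le_sqrt (tanh_sq_le_two_mul_log_cosh t)

theorem log_cosh_add_le (a b : ℝ) :
    log (cosh (a + b)) ≤ log (cosh a) + log (cosh b) + tanh a * tanh b := by
  have hab : 0 < cosh a * cosh b := by positivity
  have hratio : cosh (a + b) / (cosh a * cosh b) = 1 + tanh a * tanh b := by
    rw [cosh_add, tanh_eq_sinh_div_cosh, tanh_eq_sinh_div_cosh]; field_simp
  have := log_le_sub_one_of_pos (div_pos (cosh_pos (a + b)) hab)
  rw [log_div (cosh_pos _).ne' hab.ne', log_mul (cosh_pos a).ne' (cosh_pos b).ne', hratio] at this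
  linarith

theorem sqrt_log_cosh_add_le (a b : ℝ) :
    √(log (cosh (a + b))) ≤ √(log (cosh a)) + √(log (cosh b)) := by
  have ha : 0 ≤ log (cosh a) := log_nonneg (one_le_cosh a)
  have hb : 0 ≤ log (cosh b) := log_nonneg (one_le_cosh b)
  have htanh : tanh a * tanh b ≤ 2 * (√(log (cosh a)) * √(log (cosh b))) :=
    calc tanh a * tanh b ≤ |tanh a| * |tanh b| := by rw [← abs_mul]; exact le_abs_self _
      _ ≤ √(2 * log (cosh a)) * √(2 * log (cosh b)) :=
        mul_le_mul (abs_tanh_le_sqrt_two_mul_log_cosh a) (abs_tanh_le_sqrt_two_mul_log_cosh b)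
          (abs_nonneg _) (sqrt_nonneg _)
      _ = 2 * (√(log (cosh a)) * √(log (cosh b))) := by
        rw [sqrt_mul zero_le_two, sqrt_mul zero_le_two, mul_mul_mul_comm, mul_self_sqrt zero_le_two]
  rw [sqrt_le_left (by positivity), add_sq, sq_sqrt ha, sq_sqrt hb]
  linarith [log_cosh_add_le a b]

theorem sqrt_log_cosh_le_of_abs_le {a b : ℝ} (h : |a| ≤ |b|) :
    √(log (cosh a)) ≤ √(log (cosh b)) :=
  sqrt_le_sqrt (log_le_log (cosh_pos a) (cosh_le_cosh.2 h))

theorem sqrt_log_cosh_eq_zero_iff {t : ℝ} : √(log (cosh t)) = 0 ↔ t = 0 := by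
  rw [sqrt_eq_zero', log_nonpos_iff (cosh_pos t).le, ← not_lt, one_lt_cosh, not_not]

end Real

theorem one_add_chi_div_two_eq_cosh_sq (z w : ℍ) : 1 + chi z w / 2 = cosh (dist z w / 2) ^ 2 := by
  rw [cosh_sq', sinh_half_dist, div_pow, mul_pow, sq_sqrt (by positivity), chi, coe_im, coe_im,
    ← Complex.dist_eq]
  ring

theorem sqrtKL_eq_sqrt_two_mul (z w : ℍ) :
    sqrtKL z w = √2 * √(log (cosh (dist z w / 2))) := by
  rw [sqrtKL, one_add_chi_div_two_eq_cosh_sq, log_pow, ← sqrt_mul zero_le_two]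
  norm_num

theorem sqrtKL_is_metric :
    (∀ z w : ℂ, 0 < z.im → 0 < w.im → sqrtKL z w = sqrtKL w z) ∧
    (∀ z w : ℂ, 0 < z.im → 0 < w.im → (sqrtKL z w = 0 ↔ z = w)) ∧
    (∀ z w v : ℂ, 0 < z.im → 0 < w.im → 0 < v.im →
      sqrtKL z v ≤ sqrtKL z w + sqrtKL w v) := by
  refine ⟨fun z w hz hw => ?_, fun z w hz hw => ?_, fun z w v hz hw hv => ?_⟩
  · rw [← coe_mk z hz, ← coe_mk w hw, sqrtKL_eq_sqrt_two_mul, sqrtKL_eq_sqrt_two_mul, dist_comm]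
  · rw [← coe_mk z hz, ← coe_mk w hw, sqrtKL_eq_sqrt_two_mul, mul_eq_zero,
      sqrt_log_cosh_eq_zero_iff, coe_inj, div_eq_zero_iff, dist_eq_zero]
    norm_num
  · rw [← coe_mk z hz, ← coe_mk w hw, ← coe_mk v hv, sqrtKL_eq_sqrt_two_mul,
      sqrtKL_eq_sqrt_two_mul, sqrtKL_eq_sqrt_two_mul, ← mul_add]
    refine mul_le_mul_of_nonneg_left ?_ (sqrt_nonneg 2)
    refine (sqrt_log_cosh_le_of_abs_le ?_).trans (sqrt_log_cosh_add_le _ _)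
    rw [abs_of_nonneg (by positivity), abs_of_nonneg (by positivity)]
    linarith [dist_triangle (mk z hz) (mk w hw) (mk v hv)]
end

section
/- For every exponent α with 1/2 < α ≤ 1, the function (θ1, θ2) ↦ (log(1 + χ(θ1,θ2)/2))^α on ℍ × ℍ, where χ(θ1,θ2) = |θ1-θ2|^2/(2*Im(θ1)*Im(θ2)), fails the triangle inequality, i.e., it is not a metric on the upper half plane. -/
open Real Complex

lemma chi_add_ofReal_add_ofReal (z : ℂ) (a b : ℝ) :
    chi (z + a) (z + b) = (a - b) ^ 2 / (2 * z.im ^ 2) := by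
  have hsub : z + a - (z + b) = ((a - b : ℝ) : ℂ) := by push_cast; ring
  rw [chi, hsub, Complex.norm_real, Real.norm_eq_abs, sq_abs]
  simp only [add_im, ofReal_im, add_zero]
  ring

lemma log_one_add_chi_I_add_ofReal_half (a b : ℝ) :
    Real.log (1 + chi (I + a) (I + b) / 2) = Real.log (1 + (a - b) ^ 2 / 4) := by
  rw [chi_add_ofReal_add_ofReal, I_im]
  ring_nf

/-- Uses `log (1 + s) ≤ s` and `k s / (1 + k s) ≤ log (1 + k s)`; the choice `s = (k - c) / k²`
reduces the comparison of these bounds to `0 < (k - c)²`. -/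
lemma exists_mul_log_one_add_lt_log_one_add_mul {c k : ℝ} (hc : 0 ≤ c) (hck : c < k) :
    ∃ s > 0, c * Real.log (1 + s) < Real.log (1 + k * s) := by
  have hk : 0 < k := hc.trans_lt hck
  set s := (k - c) / k ^ 2 with hs_def
  have hs : 0 < s := div_pos (by linarith) (by positivity)
  refine ⟨s, hs, ?_⟩
  have hupper : Real.log (1 + s) ≤ s := by
    linarith [Real.log_le_sub_one_of_pos (show 0 < 1 + s by linarith)]
  have hlower : k * s / (1 + k * s) ≤ Real.log (1 + k * s) := by
    have h := Real.one_sub_inv_le_log_of_pos (show 0 < 1 + k * s by positivity)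
    have hne : 1 + k * s ≠ 0 := by positivity
    rwa [show 1 - (1 + k * s)⁻¹ = k * s / (1 + k * s) by field_simp; ring] at h
  have hmiddle : c * s < k * s / (1 + k * s) := by
    rw [lt_div_iff₀ (by positivity), hs_def]
    have hsq : 0 < (k - c) ^ 2 := by have := sub_pos.2 hck; positivity
    field_simp
    nlinarith [mul_pos (sub_pos.2 hck) hsq]
  calc c * Real.log (1 + s) ≤ c * s := mul_le_mul_of_nonneg_left hupper hc
    _ < k * s / (1 + k * s) := hmiddle
    _ ≤ Real.log (1 + k * s) := hlower

lemma rpow_add_rpow_lt_rpow_of_two_rpow_inv_mul_lt {x y α : ℝ} (hx : 0 ≤ x) (hα : 0 < α)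
    (h : 2 ^ α⁻¹ * x < y) : x ^ α + x ^ α < y ^ α := by
  calc x ^ α + x ^ α = (2 ^ α⁻¹ * x) ^ α := by
        rw [Real.mul_rpow (by positivity) hx, Real.rpow_inv_rpow zero_le_two hα.ne']
        ring
    _ < y ^ α := Real.rpow_lt_rpow (by positivity) h hα

theorem klPow_not_metric_general (α : ℝ) (hα₁ : 1 / 2 < α) :
    ∃ z w v : ℂ, 0 < z.im ∧ 0 < w.im ∧ 0 < v.im ∧
      (Real.log (1 + chi z w / 2)) ^ α + (Real.log (1 + chi w v / 2)) ^ α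
        < (Real.log (1 + chi z v / 2)) ^ α := by
  have hα : 0 < α := by linarith
  have hc : (2 : ℝ) ^ α⁻¹ < 4 := by
    calc (2 : ℝ) ^ α⁻¹ < 2 ^ (2 : ℝ) :=
          Real.rpow_lt_rpow_of_exponent_lt one_lt_two (by rw [inv_lt_comm₀ hα two_pos]; linarith)
      _ = 4 := by norm_num
  obtain ⟨s, hs, hlog⟩ := exists_mul_log_one_add_lt_log_one_add_mul (by positivity) hc
  set r := 2 * √s
  have hr : r ^ 2 = 4 * s := by rw [mul_pow, Real.sq_sqrt hs.le]; ring
  refine ⟨I + ↑(-r), I + ↑(0 : ℝ), I + ↑r, by simp, by simp, by simp, ?_⟩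
  simp only [log_one_add_chi_I_add_ofReal_half]
  have hshort₁ : 1 + (-r - 0) ^ 2 / 4 = 1 + s := by linear_combination hr / 4
  have hshort₂ : 1 + (0 - r) ^ 2 / 4 = 1 + s := by linear_combination hr / 4
  have hlong : 1 + (-r - r) ^ 2 / 4 = 1 + 4 * s := by linear_combination hr
  rw [hshort₁, hshort₂, hlong]
  exact rpow_add_rpow_lt_rpow_of_two_rpow_inv_mul_lt (Real.log_nonneg (by linarith)) hα hlog

theorem klPow_not_metric (α : ℝ) (hα₁ : 1 / 2 < α) (hα₂ : α ≤ 1) :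
    ∃ z w v : ℂ, 0 < z.im ∧ 0 < w.im ∧ 0 < v.im ∧
      (Real.log (1 + chi z w / 2)) ^ α + (Real.log (1 + chi w v / 2)) ^ α
        < (Real.log (1 + chi z v / 2)) ^ α :=
  klPow_not_metric_general α hα₁
end
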